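/- Let D = {(x_i, y_i)}_{i=1}^n and s ⊆ D a set of selected centers with ℓ(x_j, y_j) = 0 for all j ∈ s. Assume |ℓ(x_i, y_i) - ℓ(x_j, y_j)| ≤ λˡ(λᶠ+1)‖x_i - x_j‖ + λˡ(|ε_i| + |ε_j|) for all pairs. Assign each point to its nearest center (cluster of center j has k_j points, centered at x_j^c with noise ε_j^c). Then (1/n) Σ_{i∈D} ℓ(x_i, y_i) ≤ (λˡ(λᶠ+1)/n) Σ_{j∈s} Σ_{i=1}^{k_j} ‖x_i - x_j^c‖ + (λˡ/n) Σ_{i∈D} α_i |ε_i|, where α_i = 1 for i ∈ D\s and α_i = k_i + 1 for i ∈ s. -/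
import Mathlib


theorem clustering_loss_bound (d n : ℕ) (hn : 0 < n) (laml lamf : ℝ)
    (x : Fin n → EuclideanSpace ℝ (Fin d)) (ε : Fin n → ℝ) (ℓ : Fin n → ℝ)
    (s : Finset (Fin n)) (c : Fin n → Fin n)
    (hc : ∀ i, c i ∈ s)
    (hzero : ∀ j ∈ s, ℓ j = 0)
    (hpair : ∀ i j, |ℓ i - ℓ j| ≤ laml * (lamf + 1) * ‖x i - x j‖ + laml * (|ε i| + |ε j|)) :
    (1 / (n : ℝ)) * ∑ i, ℓ i ≤
      (laml * (lamf + 1) / n) * ∑ i, ‖x i - x (c i)‖ +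
      (laml / n) * ∑ i,
        (if i ∈ s then ((Finset.univ.filter fun i' => c i' = i).card + 1 : ℝ) else 1) * |ε i| := by
  have key : ∀ i, ℓ i ≤ laml * (lamf + 1) * ‖x i - x (c i)‖ + laml * (|ε i| + |ε (c i)|) := by
    intro i
    have h := hpair i (c i)
    rw [hzero (c i) (hc i), sub_zero] at h
    exact (le_abs_self _).trans h
  have hsum : ∑ i, ℓ i ≤
      laml * (lamf + 1) * ∑ i, ‖x i - x (c i)‖ +
      laml * ∑ i, (if i ∈ s then ((Finset.univ.filter fun i' => c i' = i).card + 1 : ℝ) else 1) * |ε i| := by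
    calc ∑ i, ℓ i ≤ ∑ i, (laml * (lamf + 1) * ‖x i - x (c i)‖ + laml * (|ε i| + |ε (c i)|)) :=
          Finset.sum_le_sum fun i _ => key i
      _ = laml * (lamf + 1) * ∑ i, ‖x i - x (c i)‖ + laml * (∑ i, |ε i| + ∑ i, |ε (c i)|) := by
          rw [Finset.sum_add_distrib, ← Finset.mul_sum, ← Finset.mul_sum, Finset.sum_add_distrib]
      _ = laml * (lamf + 1) * ∑ i, ‖x i - x (c i)‖ +
          laml * ∑ i, (if i ∈ s then ((Finset.univ.filter fun i' => c i' = i).card + 1 : ℝ) else 1) * |ε i| := by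
          congr 1
          congr 1
          have hfib : ∑ i, |ε (c i)| = ∑ j, ((Finset.univ.filter fun i' => c i' = j).card : ℝ) * |ε j| := by
            rw [← Finset.sum_fiberwise Finset.univ c (fun i => |ε (c i)|)]
            refine Finset.sum_congr rfl fun j _ => ?_
            rw [Finset.sum_congr rfl (fun i hi => by
              rw [(Finset.mem_filter.mp hi).2])]
            simp [Finset.sum_const, nsmul_eq_mul]
          rw [hfib, ← Finset.sum_add_distrib]
          refine Finset.sum_congr rfl fun i _ => ?_
          by_cases hi : i ∈ s
          · simp [hi]; ring
          · have hempty : (Finset.univ.filter fun i' => c i' = i) = ∅ := by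
              ext i'; simp only [Finset.mem_filter, Finset.mem_univ, true_and, Finset.notMem_empty,
                iff_false]
              intro h; exact hi (h ▸ hc i')
            simp [hi, hempty]
  have hn' : (0:ℝ) < n := by exact_mod_cast hn
  have h1 : (0:ℝ) ≤ 1 / n := by positivity
  calc (1 / (n : ℝ)) * ∑ i, ℓ i
      ≤ (1 / (n : ℝ)) * (laml * (lamf + 1) * ∑ i, ‖x i - x (c i)‖ +
        laml * ∑ i, (if i ∈ s then ((Finset.univ.filter fun i' => c i' = i).card + 1 : ℝ) else 1) * |ε i|) :=
        mul_le_mul_of_nonneg_left hsum h1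
    _ = (laml * (lamf + 1) / n) * ∑ i, ‖x i - x (c i)‖ +
      (laml / n) * ∑ i,
        (if i ∈ s then ((Finset.univ.filter fun i' => c i' = i).card + 1 : ℝ) else 1) * |ε i| := by
        ring
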